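/- arXiv:2502.16639 — 2 statements merged into one kernel-verified Lean document; each statement's English description precedes it below -/
import Mathlib

section
/- Let m > 1 be fixed and A_c^{nm} = (1/2)·[ ((2^{2+n}−1)(1+n)ζ(n+2)) / ((2^{2+m}−1)(1+m)ζ(m+2)) ]^{1/(n−m)}. Then lim_{n→m^+} A_c^{nm} = exp( ln 2/(2^{2+m}−1) + 1/(1+m) + ζ′(m+2)/ζ(m+2) ). -/
/-!
Writing `g n = (2^(2+n) - 1)(1+n) ζ(n+2)`, the bracket is `g n / g m`, and
`(g n / g m)^(1/(n-m)) = exp (slope (log ∘ g) m n)`, which tends to `exp (g' m / g m)` as `n → m`.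
Expanding the logarithmic derivative of `g` gives `ln 2 + ln 2/(2^(2+m)-1) + 1/(1+m) + ζ'/ζ`, and the
extra `exp (ln 2) = 2` cancels the factor `1/2`.
-/

open Real Filter Topology

/-- The Riemann zeta function `ζ(s) = Σ_{j=1}^∞ j^{-s}` for real `s > 1`. -/
noncomputable def rzeta (s : ℝ) : ℝ := ∑' j : ℕ, ((j : ℝ) + 1) ^ (-s)

theorem tendsto_div_rpow_one_div_sub_of_hasDerivAt {g : ℝ → ℝ} {g' a : ℝ}
    (hg : HasDerivAt g g' a) (ha : 0 < g a) :
    Tendsto (fun x => (g x / g a) ^ (1 / (x - a))) (𝓝[≠] a) (𝓝 (exp (g' / g a))) := by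
  have hslope : Tendsto (slope (fun x => log (g x)) a) (𝓝[≠] a) (𝓝 (g' / g a)) :=
    hasDerivAt_iff_tendsto_slope.mp (hg.log ha.ne')
  refine ((continuous_exp.tendsto _).comp hslope).congr' ?_
  have hpos : ∀ᶠ x in 𝓝[≠] a, 0 < g x :=
    nhdsWithin_le_nhds (hg.continuousAt.eventually (lt_mem_nhds ha))
  filter_upwards [hpos] with x hx
  rw [Function.comp_apply, rpow_def_of_pos (div_pos hx ha), log_div hx.ne' ha.ne', slope_def_field]
  ring_nf

lemma summable_rzeta {s : ℝ} (hs : 1 < s) : Summable (fun j : ℕ => ((j : ℝ) + 1) ^ (-s)) := by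
  simpa using (summable_nat_add_iff 1).mpr (summable_nat_rpow.mpr (by linarith : -s < -1))

lemma rzeta_pos {s : ℝ} (hs : 1 < s) : 0 < rzeta s := by
  have h := (summable_rzeta hs).le_tsum 0 (fun j _ => by positivity)
  simp only [Nat.cast_zero, zero_add, one_rpow] at h
  exact one_pos.trans_le h

lemma ofReal_rzeta {s : ℝ} (hs : 1 < s) : (rzeta s : ℂ) = riemannZeta s := by
  rw [rzeta, Complex.ofReal_tsum, zeta_eq_tsum_one_div_nat_add_one_cpow (by simpa using hs)]
  refine tsum_congr fun j => ?_
  rw [Complex.ofReal_cpow (by positivity)]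
  push_cast
  rw [Complex.cpow_neg, one_div]

lemma differentiableAt_rzeta {s : ℝ} (hs : 1 < s) : DifferentiableAt ℝ rzeta s := by
  have hζ : HasDerivAt (fun x : ℝ => (riemannZeta x).re) (deriv riemannZeta s).re s :=
    (differentiableAt_riemannZeta (by exact_mod_cast hs.ne')).hasDerivAt.real_of_complex
  refine (hζ.congr_of_eventuallyEq ?_).differentiableAt
  filter_upwards [Ioi_mem_nhds hs] with t ht
  rw [← ofReal_rzeta ht, Complex.ofReal_re]

/-- For fixed `m > 1`, the transition point
`A_c^{nm} = (1/2)·[((2^{2+n}−1)(1+n)ζ(n+2)) / ((2^{2+m}−1)(1+m)ζ(m+2))]^{1/(n−m)}`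
satisfies `lim_{n→m⁺} A_c^{nm} = exp(ln 2/(2^{2+m}−1) + 1/(1+m) + ζ′(m+2)/ζ(m+2))`. -/
theorem Ac_tendsto_as_n_to_m
    (m : ℝ) (hm : 1 < m) :
    Tendsto
      (fun n : ℝ =>
        (1 / 2) * (((2 ^ (2 + n) - 1) * (1 + n) * rzeta (n + 2)) /
            ((2 ^ (2 + m) - 1) * (1 + m) * rzeta (m + 2))) ^ (1 / (n - m)))
      (nhdsWithin m (Set.Ioi m))
      (nhds (Real.exp (Real.log 2 / (2 ^ (2 + m) - 1) + 1 / (1 + m) +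
        deriv rzeta (m + 2) / rzeta (m + 2)))) := by
  have hpow : 0 < (2 : ℝ) ^ (2 + m) - 1 := by
    linarith [one_lt_rpow (by norm_num : (1 : ℝ) < 2) (by linarith : 0 < 2 + m)]
  have hζ : 0 < rzeta (m + 2) := rzeta_pos (by linarith)
  have hg : HasDerivAt (fun n : ℝ => (2 ^ (2 + n) - 1) * (1 + n) * rzeta (n + 2))
      ((2 ^ (2 + m) * log 2 * (1 + m) + (2 ^ (2 + m) - 1)) * rzeta (m + 2) +
        (2 ^ (2 + m) - 1) * (1 + m) * deriv rzeta (m + 2)) m := by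
    have h2 := ((hasStrictDerivAt_const_rpow (by norm_num : (0 : ℝ) < 2) (2 + m)).hasDerivAt.comp m
      ((hasDerivAt_id m).const_add 2)).sub_const 1
    have hζ' := (differentiableAt_rzeta (by linarith : 1 < m + 2)).hasDerivAt.comp m
      ((hasDerivAt_id m).add_const 2)
    refine ((h2.mul ((hasDerivAt_id m).const_add 1)).mul hζ').congr_deriv ?_
    simp only [Function.comp_apply, Pi.mul_apply, id]
    ring
  have hlim := (tendsto_div_rpow_one_div_sub_of_hasDerivAt hg (by positivity)).const_mul (1 / 2)
  refine (hlim.mono_left (nhdsWithin_mono m fun x hx => ne_of_gt hx)).trans_eq ?_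
  congr 1
  have hlogderiv : ((2 ^ (2 + m) * log 2 * (1 + m) + (2 ^ (2 + m) - 1)) * rzeta (m + 2) +
        (2 ^ (2 + m) - 1) * (1 + m) * deriv rzeta (m + 2)) /
        ((2 ^ (2 + m) - 1) * (1 + m) * rzeta (m + 2)) =
      log 2 + (log 2 / (2 ^ (2 + m) - 1) + 1 / (1 + m) + deriv rzeta (m + 2) / rzeta (m + 2)) := by
    field_simp
    ring
  rw [hlogderiv, exp_add, exp_log (by norm_num)]
  ring
end

section
/- Let n > m > 1 be real and A > 0, and define G(Δ) = (1/(n−m))·( m·U(n,A,Δ) − n·U(m,A,Δ) ) for Δ > 0, where U(s,A,Δ) = (2A)^{−s}·ζ(s) + (1/(2(2A)^s))·( ζ(s, Δ/(1+Δ)) + ζ(s, 1/(1+Δ)) ). Then G is differentiable in Δ, its derivative vanishes at Δ > 0 if and only if (2A)^{−n}·[ ζ(n+1, 1/(1+Δ)) − ζ(n+1, Δ/(1+Δ)) ] = (2A)^{−m}·[ ζ(m+1, 1/(1+Δ)) − ζ(m+1, Δ/(1+Δ)) ], and in particular Δ = 1 is always a stationary point of G. -/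
/-!
Differentiating the Hurwitz series termwise gives `∂_q ζ(s, q) = -s ζ(s + 1, q)`. By the chain
rule, `G'(Δ)` is `mn / (2 (n - m) (1 + Δ)²)` times the difference of the two sides of the
stationarity equation, and this prefactor is positive. At `Δ = 1` both Hurwitz arguments equal
`1/2`, so each side vanishes.
-/

open Real Filter

/-- The Hurwitz zeta function `ζ(s,q) = Σ_{j=0}^∞ (j+q)^{-s}` for real `s > 1`, `q > 0`. -/
noncomputable def hzeta (s q : ℝ) : ℝ := ∑' j : ℕ, ((j : ℝ) + q) ^ (-s)

/-- The Riesz energy per particle of the bipartite chain,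
`U(s,A,Δ) = (2A)^{-s}·ζ(s) + (1/(2(2A)^s))·(ζ(s,Δ/(1+Δ)) + ζ(s,1/(1+Δ)))`. -/
noncomputable def U (s A Δ : ℝ) : ℝ :=
  (2 * A) ^ (-s) * rzeta s +
    (1 / (2 * (2 * A) ^ s)) * (hzeta s (Δ / (1 + Δ)) + hzeta s (1 / (1 + Δ)))

open Set

lemma summable_nat_add_rpow_neg {s q : ℝ} (hs : 1 < s) (hq : 0 ≤ q) :
    Summable fun j : ℕ => ((j : ℝ) + q) ^ (-s) := by
  refine ((summable_one_div_nat_add_rpow q s).2 hs).congr fun j => ?_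
  rw [abs_of_nonneg (by positivity), one_div, rpow_neg (by positivity)]

lemma hasDerivAt_nat_add_rpow_neg (j : ℕ) {s y : ℝ} (hy : 0 < y) :
    HasDerivAt (fun z => ((j : ℝ) + z) ^ (-s)) (-s * ((j : ℝ) + y) ^ (-(s + 1))) y := by
  convert ((hasDerivAt_id' y).const_add (j : ℝ)).rpow_const (p := -s) (Or.inl (by positivity))
    using 1
  ring_nf

/-- Termwise differentiation is justified on `(q/2, ∞)`, where the derivatives are dominated by
the summable `s (j + q/2)^{-(s+1)}`. -/
lemma hasDerivAt_hzeta {s q : ℝ} (hs : 1 < s) (hq : 0 < q) :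
    HasDerivAt (hzeta s) (-s * hzeta (s + 1) q) q := by
  have hq2 : q / 2 ∈ Ioi 0 := half_pos hq
  have hbound : ∀ (j : ℕ) y, y ∈ Ioi (q / 2) →
      ‖-s * ((j : ℝ) + y) ^ (-(s + 1))‖ ≤ s * ((j : ℝ) + q / 2) ^ (-(s + 1)) := by
    intro j y hy
    have hj : 0 < (j : ℝ) + q / 2 := by positivity
    have hy' : (j : ℝ) + q / 2 ≤ j + y := by linarith [hy.out]
    rw [norm_mul, norm_neg, norm_of_nonneg (by linarith : 0 ≤ s),
      norm_of_nonneg (rpow_nonneg (hj.le.trans hy') _)]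
    exact mul_le_mul_of_nonneg_left (rpow_le_rpow_of_nonpos hj hy' (by linarith)) (by linarith)
  have h := hasDerivAt_tsum_of_isPreconnected
    ((summable_nat_add_rpow_neg (by linarith) hq2.out.le).mul_left s) isOpen_Ioi
    (convex_Ioi _).isPreconnected
    (fun j y hy => hasDerivAt_nat_add_rpow_neg j (hq2.out.trans hy)) hbound
    (half_lt_self hq) (summable_nat_add_rpow_neg hs hq.le) (half_lt_self hq)
  rwa [tsum_mul_left] at h

lemma hasDerivAt_U {s : ℝ} (A : ℝ) (hs : 1 < s) {Δ : ℝ} (hΔ : 0 < Δ) :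
    HasDerivAt (U s A)
      (s / (2 * (2 * A) ^ s) / (1 + Δ) ^ 2 *
        (hzeta (s + 1) (1 / (1 + Δ)) - hzeta (s + 1) (Δ / (1 + Δ)))) Δ := by
  have hΔ' : 1 + Δ ≠ 0 := by positivity
  have hfrac : HasDerivAt (fun Δ : ℝ => Δ / (1 + Δ)) (1 / (1 + Δ) ^ 2) Δ :=
    ((hasDerivAt_id' Δ).div ((hasDerivAt_id' Δ).const_add 1) hΔ').congr_deriv (by ring)
  have hinv : HasDerivAt (fun Δ : ℝ => 1 / (1 + Δ)) (-(1 / (1 + Δ) ^ 2)) Δ :=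
    ((hasDerivAt_const Δ (1 : ℝ)).div ((hasDerivAt_id' Δ).const_add 1) hΔ').congr_deriv
      (by ring)
  have h := ((((hasDerivAt_hzeta hs (by positivity)).comp Δ hfrac).add
    ((hasDerivAt_hzeta hs (by positivity)).comp Δ hinv)).const_mul
      (1 / (2 * (2 * A) ^ s))).const_add ((2 * A) ^ (-s) * rzeta s)
  exact h.congr_deriv (by ring)

lemma hasDerivAt_bipartite_energy {n m A Δ : ℝ} (hm : 1 < m) (hnm : m < n) (hA : 0 < A)
    (hΔ : 0 < Δ) :
    HasDerivAt (fun Δ : ℝ => (1 / (n - m)) * (m * U n A Δ - n * U m A Δ))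
      (m * n / (2 * (n - m) * (1 + Δ) ^ 2) *
        ((2 * A) ^ (-n) * (hzeta (n + 1) (1 / (1 + Δ)) - hzeta (n + 1) (Δ / (1 + Δ))) -
          (2 * A) ^ (-m) * (hzeta (m + 1) (1 / (1 + Δ)) - hzeta (m + 1) (Δ / (1 + Δ))))) Δ := by
  have h := (((hasDerivAt_U A (hm.trans hnm) hΔ).const_mul m).sub
    ((hasDerivAt_U A hm hΔ).const_mul n)).const_mul (1 / (n - m))
  refine h.congr_deriv ?_
  rw [rpow_neg (by positivity), rpow_neg (by positivity)]
  field_simp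

/-- For `n > m > 1` and `A > 0`, the bipartite Lennard-Jones energy
`G(Δ) = (1/(n−m))·(m·U(n,A,Δ) − n·U(m,A,Δ))` is differentiable in `Δ > 0`; its derivative
vanishes at `Δ > 0` iff
`(2A)^{−n}·[ζ(n+1,1/(1+Δ)) − ζ(n+1,Δ/(1+Δ))] = (2A)^{−m}·[ζ(m+1,1/(1+Δ)) − ζ(m+1,Δ/(1+Δ))]`,
and in particular `Δ = 1` is always a stationary point of `G`. -/
theorem bipartite_energy_stationarity
    (n m A : ℝ) (hm : 1 < m) (hnm : m < n) (hA : 0 < A) :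
    (∀ Δ : ℝ, 0 < Δ →
      DifferentiableAt ℝ (fun Δ : ℝ => (1 / (n - m)) * (m * U n A Δ - n * U m A Δ)) Δ) ∧
    (∀ Δ : ℝ, 0 < Δ →
      (deriv (fun Δ : ℝ => (1 / (n - m)) * (m * U n A Δ - n * U m A Δ)) Δ = 0 ↔
        (2 * A) ^ (-n) * (hzeta (n + 1) (1 / (1 + Δ)) - hzeta (n + 1) (Δ / (1 + Δ))) =
          (2 * A) ^ (-m) * (hzeta (m + 1) (1 / (1 + Δ)) - hzeta (m + 1) (Δ / (1 + Δ))))) ∧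
    deriv (fun Δ : ℝ => (1 / (n - m)) * (m * U n A Δ - n * U m A Δ)) 1 = 0 := by
  have hderiv := fun Δ (hΔ : 0 < Δ) => hasDerivAt_bipartite_energy hm hnm hA hΔ
  refine ⟨fun Δ hΔ => (hderiv Δ hΔ).differentiableAt, fun Δ hΔ => ?_, ?_⟩
  · have hprefactor : m * n / (2 * (n - m) * (1 + Δ) ^ 2) ≠ 0 := by
      have hm0 : 0 < m := one_pos.trans hm
      have hnm' : 0 < 2 * (n - m) := by linarith
      exact (div_pos (mul_pos hm0 (hm0.trans hnm)) (mul_pos hnm' (by positivity))).ne'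
    rw [(hderiv Δ hΔ).deriv, mul_eq_zero, sub_eq_zero, or_iff_right hprefactor]
  · rw [(hderiv 1 one_pos).deriv]
    simp
end
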